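/- arXiv:2102.10134 — 5 statements merged into one kernel-verified Lean document; each statement's English description precedes it below -/
import Mathlib

section
/- Let G be a locally finite simple graph, x ∈ V(G), and f a real function with f(x) = 0. Then 2Γ₂(f)(x) = (1/2) Σ_{u∈B(2,x)} Σ_{v∈B(1,u)∩B(1,x)} (f(u)-2f(v))² + (Σ_{v∈B(1,x)} f(v))² + Σ_{{v,v'}∈E(G), v,v'∈B(1,x)} (2(f(v)-f(v'))² + (1/2)(f(v)²+f(v')²)) + Σ_{v∈B(1,x)} ((4-d(x)-d(v))/2) f(v)². -/
/-!
Since `f x = 0`, expanding the definitions gives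
`2Γ₂(f)(x) = ∑_{v ~ x} (Γ(f)(v) - f(v) Δf(v)) + (Δf(x))² - d(x) Γ(f)(x)`, and
`Γ(f)(v) - f(v) Δf(v)` is a sum over the edges `vw` of `3/2 f(v)² - 2 f(v) f(w) + 1/2 f(w)²`.
Sort the neighbours `w` of `v` into `x`, `B(1,x)` and `B(2,x)`. On the edges towards `B(2,x)`
complete the square to `1/2 (f(w) - 2 f(v))² - 1/2 f(v)²`; on the edges inside `B(1,x)` the
summand is a symmetric part plus the antisymmetric `3/4 (f(v)² - f(w)²)`, which cancels over
the edge set. The leftover multiples of `f(v)²` add up to `(4 - d(x) - d(v))/2 · f(v)²` because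
`d(v) = 1 + |B(1,v) ∩ B(1,x)| + |B(1,v) ∩ B(2,x)|`.
-/

open Finset Real

namespace RicciPaper

variable {V : Type*} [DecidableEq V] (G : SimpleGraph V) [∀ v : V, Fintype (G.neighborSet v)]

/-- The graph Laplacian operator `Δ`. -/
noncomputable def lap (f : V → ℝ) (x : V) : ℝ :=
  ∑ v ∈ G.neighborFinset x, (f v - f x)

/-- The operator `Γ`. -/
noncomputable def gam (f g : V → ℝ) (x : V) : ℝ :=
  (1 / 2) * ∑ v ∈ G.neighborFinset x, (f x - f v) * (g x - g v)

/-- The operator `Γ₂`. -/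
noncomputable def gam2 (f : V → ℝ) (x : V) : ℝ :=
  (1 / 2) * lap G (fun y => gam G f f y) x - gam G f (lap G f) x

/-- The local discrete Ricci curvature at `x`: the largest `K ∈ ℝ ∪ {-∞}` with
`Γ₂(f)(x) ≥ K Γ(f,f)(x)` for all `f`. -/
noncomputable def ricLoc (x : V) : EReal :=
  sSup {K : EReal | ∃ k : ℝ, K = (k : EReal) ∧ ∀ f : V → ℝ, k * gam G f f x ≤ gam2 G f x}

/-- The discrete Ricci curvature of `G`. -/
noncomputable def ric : EReal :=
  sSup {K : EReal | ∃ k : ℝ, K = (k : EReal) ∧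
    ∀ (x : V) (f : V → ℝ), k * gam G f f x ≤ gam2 G f x}

/-- The set `B(2,x)` of vertices at distance exactly 2 from `x`, as a finset. -/
noncomputable def sphere2 (x : V) : Finset V :=
  ((G.neighborFinset x).biUnion fun v => G.neighborFinset v).filter fun u => G.dist x u = 2


lemma mem_sphere2 {x w : V} :
    w ∈ sphere2 G x ↔ x ≠ w ∧ ¬G.Adj x w ∧ ∃ v, G.Adj x v ∧ G.Adj v w := by
  have hdist : G.dist x w = 2 ↔ G.edist x w = 2 := by
    rw [SimpleGraph.dist, ENat.toNat_eq_iff two_ne_zero]; rfl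
  simp only [sphere2, mem_filter, mem_biUnion, SimpleGraph.mem_neighborFinset, hdist,
    SimpleGraph.edist_eq_two_iff]
  constructor
  · rintro ⟨⟨v, hxv, hvw⟩, hxw, hadj, -⟩
    exact ⟨hxw, hadj, v, hxv, hvw⟩
  · rintro ⟨hxw, hadj, v, hxv, hvw⟩
    exact ⟨⟨v, hxv, hvw⟩, hxw, hadj, v, G.mem_commonNeighbors.2 ⟨hxv, hvw.symm⟩⟩

lemma neighborFinset_eq_insert_of_adj {x v : V} (h : G.Adj x v) :
    G.neighborFinset v = insert x
      (G.neighborFinset v ∩ G.neighborFinset x ∪ G.neighborFinset v ∩ sphere2 G x) := by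
  ext w
  simp only [mem_insert, mem_union, mem_inter, SimpleGraph.mem_neighborFinset, mem_sphere2]
  by_cases hw : w = x
  · simp [hw, h.symm]
  · have := G.adj_comm v w
    grind

lemma sum_neighborFinset_eq_of_adj {M : Type*} [AddCommMonoid M] {x v : V} (h : G.Adj x v)
    (g : V → M) :
    ∑ w ∈ G.neighborFinset v, g w
      = g x + ∑ w ∈ G.neighborFinset v ∩ G.neighborFinset x, g w
        + ∑ w ∈ G.neighborFinset v ∩ sphere2 G x, g w := by
  conv_lhs => rw [neighborFinset_eq_insert_of_adj G h]
  rw [sum_insert, sum_union, add_assoc]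
  · exact disjoint_left.2 fun w hN hS =>
      ((mem_sphere2 G).1 (mem_inter.1 hS).2).2.1 ((G.mem_neighborFinset x w).1 (mem_inter.1 hN).2)
  · simp [mem_sphere2]

lemma degree_eq_of_adj {x v : V} (h : G.Adj x v) :
    G.degree v = 1 + #(G.neighborFinset v ∩ G.neighborFinset x)
      + #(G.neighborFinset v ∩ sphere2 G x) := by
  rw [← SimpleGraph.card_neighborFinset_eq_degree, card_eq_sum_ones,
    sum_neighborFinset_eq_of_adj G h, card_eq_sum_ones, card_eq_sum_ones]

lemma sum_sum_neighborFinset_inter_comm {M : Type*} [AddCommMonoid M] (s t : Finset V)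
    (g : V → V → M) :
    ∑ v ∈ s, ∑ w ∈ G.neighborFinset v ∩ t, g v w
      = ∑ w ∈ t, ∑ v ∈ G.neighborFinset w ∩ s, g v w :=
  sum_comm' fun v w => by
    simp only [mem_inter, SimpleGraph.mem_neighborFinset, G.adj_comm v w]
    tauto

lemma sum_sum_ite_adj [DecidableRel G.Adj] {M : Type*} [AddCommMonoid M] (s : Finset V)
    (g : V → V → M) :
    ∑ v ∈ s, ∑ w ∈ s, (if G.Adj v w then g v w else 0)
      = ∑ v ∈ s, ∑ w ∈ G.neighborFinset v ∩ s, g v w := by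
  refine sum_congr rfl fun v _ => ?_
  rw [← sum_filter]
  congr 1
  ext w
  simp [and_comm]

/-- `Γ(f)(v) - f(v) Δf(v) = ∑_{w ~ v} edgeTerm (f v) (f w)`. -/
noncomputable def edgeTerm (a b : ℝ) : ℝ := 3 / 2 * a ^ 2 - 2 * a * b + 1 / 2 * b ^ 2

lemma two_mul_gam2_of_eq_zero {f : V → ℝ} {x : V} (hf : f x = 0) :
    2 * gam2 G f x = ∑ v ∈ G.neighborFinset x, (3 / 2 * f v ^ 2
        + ∑ w ∈ G.neighborFinset v ∩ G.neighborFinset x, edgeTerm (f v) (f w)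
        + ∑ w ∈ G.neighborFinset v ∩ sphere2 G x, edgeTerm (f v) (f w))
      + (∑ v ∈ G.neighborFinset x, f v) ^ 2
      - G.degree x / 2 * ∑ v ∈ G.neighborFinset x, f v ^ 2 := by
  have hlap : lap G f x = ∑ v ∈ G.neighborFinset x, f v := by simp [lap, hf]
  have hgam : gam G f f x = 1 / 2 * ∑ v ∈ G.neighborFinset x, f v ^ 2 := by
    simp [gam, hf, sq]
  have hgam_lap : gam G f (lap G f) x = 1 / 2 * (∑ v ∈ G.neighborFinset x, f v * lap G f v
      - (∑ v ∈ G.neighborFinset x, f v) ^ 2) := by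
    rw [gam, hlap, sq, sum_mul, ← sum_sub_distrib]
    exact congrArg _ (sum_congr rfl fun v _ => by rw [hf]; ring)
  have hvertex : ∀ v ∈ G.neighborFinset x, gam G f f v - f v * lap G f v = 3 / 2 * f v ^ 2
      + ∑ w ∈ G.neighborFinset v ∩ G.neighborFinset x, edgeTerm (f v) (f w)
      + ∑ w ∈ G.neighborFinset v ∩ sphere2 G x, edgeTerm (f v) (f w) := by
    intro v hv
    rw [gam, lap, mul_sum, mul_sum, ← sum_sub_distrib,
      sum_congr rfl fun w _ => show _ = edgeTerm (f v) (f w) by rw [edgeTerm]; ring,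
      sum_neighborFinset_eq_of_adj G ((G.mem_neighborFinset x v).1 hv), edgeTerm, hf]
    ring
  rw [← sum_congr rfl hvertex, gam2, lap, sum_sub_distrib, sum_const,
    SimpleGraph.card_neighborFinset_eq_degree, nsmul_eq_mul, hgam, hgam_lap, sum_sub_distrib]
  ring

lemma sum_sum_edgeTerm_inter (f : V → ℝ) (s t : Finset V) :
    ∑ v ∈ s, ∑ w ∈ G.neighborFinset v ∩ t, edgeTerm (f v) (f w)
      = 1 / 2 * ∑ u ∈ t, ∑ v ∈ G.neighborFinset u ∩ s, (f u - 2 * f v) ^ 2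
        - 1 / 2 * ∑ v ∈ s, #(G.neighborFinset v ∩ t) * f v ^ 2 := by
  have hsquare : ∀ v w, edgeTerm (f v) (f w) = 1 / 2 * (f w - 2 * f v) ^ 2 - 1 / 2 * f v ^ 2 :=
    fun v w => by rw [edgeTerm]; ring
  simp only [hsquare, sum_sub_distrib, ← mul_sum, sum_const, nsmul_eq_mul]
  rw [sum_sum_neighborFinset_inter_comm G s t]

lemma sum_sum_edgeTerm_inter_self [DecidableRel G.Adj] (f : V → ℝ) (s : Finset V) :
    ∑ v ∈ s, ∑ w ∈ G.neighborFinset v ∩ s, edgeTerm (f v) (f w)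
      = 1 / 2 * ∑ v ∈ s, ∑ v' ∈ s,
          (if G.Adj v v' then 2 * (f v - f v') ^ 2 + 1 / 2 * (f v ^ 2 + f v' ^ 2) else 0)
        - 1 / 2 * ∑ v ∈ s, #(G.neighborFinset v ∩ s) * f v ^ 2 := by
  -- the part `3/4 (f v ^ 2 - f w ^ 2)` of `edgeTerm` is antisymmetric and sums to zero
  have hsplit : ∀ v w, edgeTerm (f v) (f w) = 1 / 2 * (2 * (f v - f w) ^ 2
      + 1 / 2 * (f v ^ 2 + f w ^ 2)) + 3 / 4 * f v ^ 2 - 3 / 4 * f w ^ 2 - 1 / 2 * f v ^ 2 :=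
    fun v w => by rw [edgeTerm]; ring
  have hsymm := sum_sum_neighborFinset_inter_comm G s s fun _ w => f w ^ 2
  simp only [hsplit, sum_sub_distrib, sum_add_distrib, ← mul_sum, sum_const, nsmul_eq_mul,
    sum_sum_ite_adj] at hsymm ⊢
  rw [hsymm]
  ring


variable [DecidableRel G.Adj]

/-- the explicit formula for 2*Gamma2(f)(x) when f(x) = 0. -/
theorem two_gam2_eq (x : V) (f : V → ℝ) (hf : f x = 0) :
    2 * gam2 G f x =
      (1 / 2) * ∑ u ∈ sphere2 G x, ∑ v ∈ G.neighborFinset u ∩ G.neighborFinset x,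
          (f u - 2 * f v) ^ 2
      + (∑ v ∈ G.neighborFinset x, f v) ^ 2
      + (1 / 2) * ∑ v ∈ G.neighborFinset x, ∑ v' ∈ G.neighborFinset x,
          (if G.Adj v v' then 2 * (f v - f v') ^ 2 + (1 / 2) * ((f v) ^ 2 + (f v') ^ 2) else 0)
      + ∑ v ∈ G.neighborFinset x, ((4 - (G.degree x : ℝ) - (G.degree v : ℝ)) / 2) * (f v) ^ 2 := by
  have hdegree : ∑ v ∈ G.neighborFinset x, 3 / 2 * f v ^ 2
      - 1 / 2 * ∑ v ∈ G.neighborFinset x, #(G.neighborFinset v ∩ G.neighborFinset x) * f v ^ 2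
      - 1 / 2 * ∑ v ∈ G.neighborFinset x, #(G.neighborFinset v ∩ sphere2 G x) * f v ^ 2
      - G.degree x / 2 * ∑ v ∈ G.neighborFinset x, f v ^ 2
      = ∑ v ∈ G.neighborFinset x, (4 - G.degree x - G.degree v) / 2 * f v ^ 2 := by
    simp only [mul_sum, ← sum_sub_distrib]
    refine sum_congr rfl fun v hv => ?_
    rw [degree_eq_of_adj G ((G.mem_neighborFinset x v).1 hv)]
    push_cast
    ring
  rw [two_mul_gam2_of_eq_zero G hf, sum_add_distrib, sum_add_distrib,
    sum_sum_edgeTerm_inter_self, sum_sum_edgeTerm_inter]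
  linear_combination hdegree

end RicciPaper
end

section
/- Let G be a locally finite simple graph, x a vertex, and f a real function on V(G) with f(x) = 0 and Γ(f,f)(x) = 0. Then Γ₂(f)(x) ≥ 0. -/
open Finset Real

namespace RicciPaper

variable {V : Type*} [DecidableEq V] (G : SimpleGraph V) [∀ v : V, Fintype (G.neighborSet v)]

/-- if f(x) = 0 and Gamma(f,f)(x) = 0 then Gamma2(f)(x) ≥ 0. -/
theorem gam2_nonneg_of_gam_eq_zero (hiso : ∀ x : V, ∃ y, G.Adj x y)
    (x : V) (f : V → ℝ) (hfx : f x = 0) (hgam : gam G f f x = 0) :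
    0 ≤ gam2 G f x := by
  have hz : ∀ v ∈ G.neighborFinset x, f v = 0 := by
    have h : ∑ v ∈ G.neighborFinset x, (f x - f v) * (f x - f v) = 0 := by
      unfold gam at hgam; linarith
    intro v hv
    have h0 := (Finset.sum_eq_zero_iff_of_nonneg
      (fun i _ => mul_self_nonneg (f x - f i))).mp h v hv
    nlinarith [h0]
  unfold gam2
  have h2 : gam G f (lap G f) x = 0 := by
    unfold gam
    apply mul_eq_zero_of_right
    apply Finset.sum_eq_zero
    intro v hv
    rw [hfx, hz v hv]; ring
  rw [h2, sub_zero]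
  apply mul_nonneg (by norm_num)
  unfold lap
  apply Finset.sum_nonneg
  intro v hv
  have hnn : 0 ≤ gam G f f v :=
    mul_nonneg (by norm_num)
      (Finset.sum_nonneg fun i _ => mul_self_nonneg (f v - f i))
  simp only [hgam, sub_zero]
  exact hnn

end RicciPaper
end

section
/- Let n ≥ 1 and let M be the n×n real tridiagonal matrix with diagonal entries (b-α, b, b, ..., b, b-β), subdiagonal entries all equal to a, and superdiagonal entries all equal to c, where ac > 0 and α = β = √(ac) ≠ 0. Then the eigenvalues of M are exactly λ_i = b + 2√(ac)·cos(iπ/n) for i = 1, ..., n. -/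
/-!
With `s = √(ac)` and `t = a / s`, the sequence `V m = t ^ m * sin ((m - 1/2) * θ)` satisfies the
three-term recurrence `a V m + b V (m+1) + c V (m+2) = (b + 2 s cos θ) V (m+1)` for every `θ`.
Restricted to the indices `1, …, n` it is an eigenvector of `M(s, s, a, b, c)` as soon as the
"ghost" values `V 0` and `V (n+1)` are absorbed by the corner corrections `-s`: on the left this
always holds, on the right it amounts to `sin (n θ) = 0`. The angles `θ = iπ/n`, `i = 1, …, n`,
give `n` distinct eigenvalues, and since eigenvectors for distinct eigenvalues are linearly
independent, an `n × n` matrix has no others.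
-/

open Finset Real

/-- The tridiagonal matrix M(α,β,a,b,c) with diagonal (b-α, b, …, b, b-β),
subdiagonal a and superdiagonal c. -/
def triM (n : ℕ) (α β a b c : ℝ) : Matrix (Fin n) (Fin n) ℝ := fun i j =>
  if i = j then b - (if (i : ℕ) = 0 then α else 0) - (if (i : ℕ) = n - 1 then β else 0)
  else if (i : ℕ) + 1 = (j : ℕ) then c
  else if (j : ℕ) + 1 = (i : ℕ) then a
  else 0

open Matrix

theorem Matrix.setOf_exists_eigenvector_eq_range {K ι : Type*} [Field K] [Fintype ι]
    (A : Matrix ι ι K) {μ : ι → K} (hμ : Function.Injective μ)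
    (hev : ∀ i, ∃ v, v ≠ 0 ∧ A *ᵥ v = μ i • v) :
    {lam | ∃ v, v ≠ 0 ∧ A *ᵥ v = lam • v} = Set.range μ := by
  refine Set.Subset.antisymm ?_ (Set.range_subset_iff.2 hev)
  rintro lam ⟨v, hv0, hv⟩
  by_contra hlam
  choose w hw0 hw using hev
  have hind : LinearIndependent K fun o : Option ι => o.elim v w := by
    refine Module.End.eigenvectors_linearIndependent' (mulVecLin A) (fun o => o.elim lam μ) ?_ _ ?_
    · rintro (_ | i) (_ | j) h
      · rfl
      · exact absurd ⟨j, h.symm⟩ hlam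
      · exact absurd ⟨i, h⟩ hlam
      · exact congrArg some (hμ h)
    · rintro (_ | i)
      · exact ⟨Module.End.mem_eigenspace_iff.2 hv, hv0⟩
      · exact ⟨Module.End.mem_eigenspace_iff.2 (hw i), hw0 i⟩
  simpa using hind.fintype_card_le_finrank

theorem triM_mulVec_succ_apply (n : ℕ) (α β a b c : ℝ) (V : ℕ → ℝ) (p : Fin n) :
    (triM n α β a b c *ᵥ fun j => V (j + 1)) p =
      a * V p + b * V (p + 1) + c * V (p + 2)
        - (if (p : ℕ) = 0 then a * V p + α * V (p + 1) else 0)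
        - (if (p : ℕ) = n - 1 then c * V (p + 2) + β * V (p + 1) else 0) := by
  set g : ℕ → ℝ := fun k => (if k = p then (b - (if (p : ℕ) = 0 then α else 0)
          - (if (p : ℕ) = n - 1 then β else 0)) * V (p + 1) else 0)
        + (if k = p + 1 then c * V (p + 2) else 0)
        + (if k = p - 1 then (if (p : ℕ) = 0 then 0 else a * V p) else 0) with hg
  have hentry (j : Fin n) : triM n α β a b c p j * V (j + 1) = g j := by
    simp only [triM, hg, Fin.ext_iff]
    grind
  calc (triM n α β a b c *ᵥ fun j => V (j + 1)) p
      = ∑ j : Fin n, g j := by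
        simp only [mulVec, dotProduct]
        exact sum_congr rfl fun j _ => hentry j
    _ = ∑ k ∈ range n, g k := Fin.sum_univ_eq_sum_range g n
    _ = _ := by
      simp only [hg, sum_add_distrib, sum_ite_eq', mem_range]
      split_ifs <;> first | omega | ring

theorem triM_mulVec_succ_eq_smul {n : ℕ} {α β a b c lam : ℝ} {V : ℕ → ℝ}
    (hrec : ∀ m, a * V m + b * V (m + 1) + c * V (m + 2) = lam * V (m + 1))
    (hleft : a * V 0 + α * V 1 = 0) (hright : c * V (n + 1) + β * V n = 0) :
    (triM n α β a b c *ᵥ fun j => V (j + 1)) = lam • fun j : Fin n => V (j + 1) := by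
  ext p
  have hfirst : (p : ℕ) = 0 → a * V p + α * V (p + 1) = 0 := fun h => by rw [h]; exact hleft
  have hlast : (p : ℕ) = n - 1 → c * V (p + 2) + β * V (p + 1) = 0 := fun h => by
    rw [show (p : ℕ) + 2 = n + 1 by omega, show (p : ℕ) + 1 = n by omega]
    exact hright
  rw [triM_mulVec_succ_apply, hrec, ite_eq_right_iff.2 hfirst, ite_eq_right_iff.2 hlast,
    sub_zero, sub_zero, Pi.smul_apply, smul_eq_mul]

noncomputable def sinGeomSeq (t θ : ℝ) (m : ℕ) : ℝ := t ^ m * sin ((m - 1 / 2) * θ)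

section sinGeomSeq

variable {a c s t : ℝ} (b θ : ℝ)

theorem sinGeomSeq_recurrence (hts : t * s = a) (hct : c * t = s) (m : ℕ) :
    a * sinGeomSeq t θ m + b * sinGeomSeq t θ (m + 1) + c * sinGeomSeq t θ (m + 2) =
      (b + 2 * s * cos θ) * sinGeomSeq t θ (m + 1) := by
  have h := two_mul_sin_mul_cos ((m + 1 / 2) * θ) θ
  simp only [sinGeomSeq, pow_succ]
  push_cast
  rw [show ((m:ℝ) - 1 / 2) * θ = (m + 1 / 2) * θ - θ by ring,
    show ((m:ℝ) + 2 - 1 / 2) * θ = (m + 1 / 2) * θ + θ by ring,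
    show ((m:ℝ) + 1 - 1 / 2) * θ = (m + 1 / 2) * θ by ring]
  linear_combination (-t ^ m * sin ((m + 1 / 2) * θ - θ)) * hts
    + (t ^ m * t * sin ((m + 1 / 2) * θ + θ)) * hct - (s * t ^ m * t) * h

theorem sinGeomSeq_one : sinGeomSeq t θ 1 = t * sin (θ / 2) := by
  rw [sinGeomSeq, pow_one, Nat.cast_one]
  ring_nf

theorem sinGeomSeq_left (hts : t * s = a) : a * sinGeomSeq t θ 0 + s * sinGeomSeq t θ 1 = 0 := by
  rw [sinGeomSeq_one, sinGeomSeq, pow_zero, Nat.cast_zero, zero_sub, neg_mul, one_div_mul_eq_div,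
    sin_neg]
  linear_combination sin (θ / 2) * hts

theorem sinGeomSeq_right (hct : c * t = s) {n : ℕ} (hnθ : sin (n * θ) = 0) :
    c * sinGeomSeq t θ (n + 1) + s * sinGeomSeq t θ n = 0 := by
  have h := two_mul_sin_mul_cos (n * θ) (θ / 2)
  simp only [sinGeomSeq, pow_succ]
  push_cast
  rw [show ((n:ℝ) + 1 - 1 / 2) * θ = n * θ + θ / 2 by ring,
    show ((n:ℝ) - 1 / 2) * θ = n * θ - θ / 2 by ring]
  linear_combination (t ^ n * sin (n * θ + θ / 2)) * hct - (s * t ^ n) * h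
    + (2 * s * t ^ n * cos (θ / 2)) * hnθ

end sinGeomSeq

theorem triM_exists_eigenvector {n : ℕ} (hn : 1 ≤ n) {a c s θ : ℝ} (b : ℝ) (hs0 : s ≠ 0)
    (hs : s ^ 2 = a * c) (hnθ : sin (n * θ) = 0) (hθ : sin (θ / 2) ≠ 0) :
    ∃ v, v ≠ 0 ∧ triM n s s a b c *ᵥ v = (b + 2 * s * cos θ) • v := by
  set t := a / s
  have hts : t * s = a := div_mul_cancel₀ a hs0
  have hct : c * t = s := by rw [mul_div_assoc', mul_comm c a, ← hs, sq, mul_self_div_self]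
  have ht : t ≠ 0 := right_ne_zero_of_mul (hct ▸ hs0)
  refine ⟨fun j => sinGeomSeq t θ (j + 1), fun h => ?_, triM_mulVec_succ_eq_smul
    (sinGeomSeq_recurrence b θ hts hct) (sinGeomSeq_left θ hts) (sinGeomSeq_right θ hct hnθ)⟩
  have h0 := congrFun h ⟨0, hn⟩
  rw [Pi.zero_apply, zero_add, sinGeomSeq_one] at h0
  exact mul_ne_zero ht hθ h0

theorem succ_mul_pi_div_mem_Ioc {n : ℕ} (i : Fin n) :
    ((i : ℝ) + 1) * π / n ∈ Set.Ioc 0 π := by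
  have hn : (0 : ℝ) < n := by exact_mod_cast i.pos
  have hi : (i : ℝ) + 1 ≤ n := by exact_mod_cast i.isLt
  refine ⟨by positivity, ?_⟩
  rw [div_le_iff₀ hn]
  nlinarith [pi_pos]

theorem sin_half_succ_mul_pi_div_pos {n : ℕ} (i : Fin n) :
    0 < sin (((i : ℝ) + 1) * π / n / 2) := by
  obtain ⟨hpos, hle⟩ := succ_mul_pi_div_mem_Ioc i
  exact sin_pos_of_pos_of_lt_pi (half_pos hpos) (by linarith [pi_pos])

theorem injective_cos_succ_mul_pi_div (n : ℕ) :
    Function.Injective fun i : Fin n => cos (((i : ℝ) + 1) * π / n) := by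
  intro i j h
  have hmem (k : Fin n) := Set.Ioc_subset_Icc_self (succ_mul_pi_div_mem_Ioc k)
  have := injOn_cos (hmem i) (hmem j) h
  have hn : (n : ℝ) ≠ 0 := by exact_mod_cast i.pos.ne'
  field_simp at this
  exact Fin.ext (by exact_mod_cast add_right_cancel this)

/-- the eigenvalues of the tridiagonal matrix are exactly
b + 2√(ac)·cos(iπ/n) for i = 1,…,n. -/
theorem triM_eigenvalues (n : ℕ) (hn : 1 ≤ n) (α β a b c : ℝ)
    (hac : 0 < a * c) (hα : α = Real.sqrt (a * c)) (hβ : β = Real.sqrt (a * c)) :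
    {lam : ℝ | ∃ v : Fin n → ℝ, v ≠ 0 ∧ (triM n α β a b c).mulVec v = lam • v} =
      {lam : ℝ | ∃ i : Fin n, lam = b + 2 * Real.sqrt (a * c) *
        Real.cos ((((i : ℕ) : ℝ) + 1) * π / n)} := by
  subst hα hβ
  have hs : 0 < √(a * c) := sqrt_pos.2 hac
  have hn0 : (n : ℝ) ≠ 0 := by positivity
  have heig (i : Fin n) := triM_exists_eigenvector hn b hs.ne' (sq_sqrt hac.le)
    (θ := ((i : ℝ) + 1) * π / n)
    (by rw [mul_div_cancel₀ _ hn0]; exact_mod_cast sin_nat_mul_pi (i + 1))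
    (sin_half_succ_mul_pi_div_pos i).ne'
  have hinj :
      Function.Injective fun i : Fin n => b + 2 * √(a * c) * cos (((i : ℝ) + 1) * π / n) :=
    fun i j h =>
      injective_cos_succ_mul_pi_div n (mul_left_cancel₀ (by positivity) (add_left_cancel h))
  rw [Matrix.setOf_exists_eigenvector_eq_range _ hinj heig]
  ext
  simp [eq_comm]
end

section
/- Let G be a triangle-free locally finite simple graph. Then Ric(G) ≥ 4 - max over edges {x,y} of (3d(x)+d(y))/2. -/
open Finset Real

namespace RicciPaper

variable {V : Type*} [DecidableEq V] (G : SimpleGraph V) [∀ v : V, Fintype (G.neighborSet v)]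

lemma per_y (f : V → ℝ) (x y : V) :
    (1/2) * gam G f f y + (1/2) * (f x - f y) * lap G f y
      = (1/4) * (∑ z ∈ G.neighborFinset y, (f x + f z - 2 * f y)^2)
        - (1/4) * (G.degree y : ℝ) * (f x - f y)^2 := by
  have hA : ∑ z ∈ G.neighborFinset y, (f x + f z - 2 * f y)^2
      = ((G.neighborFinset y).card : ℝ) * (f x - f y)^2
        - 2 * (f x - f y) * (∑ z ∈ G.neighborFinset y, (f y - f z))
        + ∑ z ∈ G.neighborFinset y, (f y - f z) * (f y - f z) :=
    calc ∑ z ∈ G.neighborFinset y, (f x + f z - 2 * f y)^2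
        = ∑ z ∈ G.neighborFinset y,
            ((f x - f y)^2 - 2 * (f x - f y) * (f y - f z) + (f y - f z) * (f y - f z)) :=
          Finset.sum_congr rfl fun z _ => by ring
      _ = (∑ _z ∈ G.neighborFinset y, (f x - f y)^2)
            - (∑ z ∈ G.neighborFinset y, 2 * (f x - f y) * (f y - f z))
            + ∑ z ∈ G.neighborFinset y, (f y - f z) * (f y - f z) := by
          rw [Finset.sum_add_distrib, Finset.sum_sub_distrib]
      _ = ((G.neighborFinset y).card : ℝ) * (f x - f y)^2
            - 2 * (f x - f y) * (∑ z ∈ G.neighborFinset y, (f y - f z))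
            + ∑ z ∈ G.neighborFinset y, (f y - f z) * (f y - f z) := by
          rw [Finset.sum_const, nsmul_eq_mul, ← Finset.mul_sum]
  have hB : lap G f y = - ∑ z ∈ G.neighborFinset y, (f y - f z) := by
    rw [lap, ← Finset.sum_neg_distrib]
    exact Finset.sum_congr rfl fun z _ => by ring
  rw [gam, hA, hB, G.card_neighborFinset_eq_degree]
  ring

lemma gam2_eq (f : V → ℝ) (x : V) :
    gam2 G f x = (∑ y ∈ G.neighborFinset x,
        ((1/4) * (∑ z ∈ G.neighborFinset y, (f x + f z - 2 * f y)^2)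
          - (1/4) * ((G.degree x : ℝ) + (G.degree y : ℝ)) * (f x - f y)^2))
      + (1/2) * (∑ y ∈ G.neighborFinset x, (f x - f y))^2 := by
  have hlap1 : lap G (fun y => gam G f f y) x
      = ∑ y ∈ G.neighborFinset x, (gam G f f y - gam G f f x) := rfl
  have hgam1 : gam G f (lap G f) x
      = (1/2) * ∑ y ∈ G.neighborFinset x, (f x - f y) * (lap G f x - lap G f y) := rfl
  have h1 : ∑ y ∈ G.neighborFinset x, (gam G f f y - gam G f f x)
      = (∑ y ∈ G.neighborFinset x, gam G f f y) - (G.degree x : ℝ) * gam G f f x := by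
    rw [Finset.sum_sub_distrib, Finset.sum_const, nsmul_eq_mul, G.card_neighborFinset_eq_degree]
  have h2 : ∑ y ∈ G.neighborFinset x, (f x - f y) * (lap G f x - lap G f y)
      = lap G f x * (∑ y ∈ G.neighborFinset x, (f x - f y))
        - ∑ y ∈ G.neighborFinset x, (f x - f y) * lap G f y := by
    rw [Finset.mul_sum, ← Finset.sum_sub_distrib]
    exact Finset.sum_congr rfl fun y _ => by ring
  have h3 : lap G f x = - ∑ y ∈ G.neighborFinset x, (f x - f y) := by
    rw [lap, ← Finset.sum_neg_distrib]
    exact Finset.sum_congr rfl fun y _ => by ring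
  have h4 : gam G f f x = (1/2) * ∑ y ∈ G.neighborFinset x, (f x - f y)^2 := by
    rw [gam]
    congr 1
    exact Finset.sum_congr rfl fun y _ => by ring
  have h5 : ∑ y ∈ G.neighborFinset x,
        ((1/4) * (∑ z ∈ G.neighborFinset y, (f x + f z - 2 * f y)^2)
          - (1/4) * ((G.degree x : ℝ) + (G.degree y : ℝ)) * (f x - f y)^2)
      = (1/2) * (∑ y ∈ G.neighborFinset x, gam G f f y)
        + (1/2) * (∑ y ∈ G.neighborFinset x, (f x - f y) * lap G f y)
        - (1/4) * (G.degree x : ℝ) * (∑ y ∈ G.neighborFinset x, (f x - f y)^2) := by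
    rw [Finset.mul_sum, Finset.mul_sum, Finset.mul_sum, ← Finset.sum_add_distrib,
      ← Finset.sum_sub_distrib]
    apply Finset.sum_congr rfl
    intro y _
    linear_combination - per_y G f x y
  rw [gam2, hlap1, hgam1, h1, h2, h3, h4, h5]
  ring

lemma sq_sum_aux {α : Type*} (s : Finset α) (g : α → ℝ) :
    (2 - (s.card : ℝ)) * ∑ i ∈ s, (g i)^2 ≤ (∑ i ∈ s, g i)^2 := by
  rcases le_or_gt 2 s.card with h | h
  · have h1 : (2 - (s.card : ℝ)) ≤ 0 := by
      have : (2 : ℝ) ≤ (s.card : ℝ) := by exact_mod_cast h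
      linarith
    have h2 : (0:ℝ) ≤ ∑ i ∈ s, (g i)^2 := Finset.sum_nonneg fun i _ => sq_nonneg _
    nlinarith [sq_nonneg (∑ i ∈ s, g i)]
  · interval_cases h' : s.card
    · rw [Finset.card_eq_zero.mp h']
      simp
    · obtain ⟨a, ha⟩ := Finset.card_eq_one.mp h'
      rw [ha, Finset.sum_singleton, Finset.sum_singleton]
      norm_num

lemma pointwise (M : ℝ)
    (hM : ∀ x y : V, G.Adj x y → (3 * (G.degree x : ℝ) + (G.degree y : ℝ)) / 2 ≤ M)
    (x : V) (f : V → ℝ) : (4 - M) * gam G f f x ≤ gam2 G f x := by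
  rw [gam2_eq]
  have hgamx : gam G f f x = (1/2) * ∑ y ∈ G.neighborFinset x, (f x - f y)^2 := by
    rw [gam]
    congr 1
    exact Finset.sum_congr rfl fun y _ => by ring
  rw [hgamx]
  set Q : ℝ := ∑ y ∈ G.neighborFinset x, (f x - f y)^2 with hQ
  have partA : (1 - M/2 + (G.degree x : ℝ)/2) * Q
      ≤ ∑ y ∈ G.neighborFinset x,
          ((1/4) * (∑ z ∈ G.neighborFinset y, (f x + f z - 2 * f y)^2)
            - (1/4) * ((G.degree x : ℝ) + (G.degree y : ℝ)) * (f x - f y)^2) := by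
    rw [hQ, Finset.mul_sum]
    apply Finset.sum_le_sum
    intro y hy
    have hadj : G.Adj x y := (SimpleGraph.mem_neighborFinset G x y).mp hy
    have hMxy := hM x y hadj
    have hx : x ∈ G.neighborFinset y := (SimpleGraph.mem_neighborFinset G y x).mpr hadj.symm
    have h1 : (f x + f x - 2 * f y)^2 ≤ ∑ z ∈ G.neighborFinset y, (f x + f z - 2 * f y)^2 := by
      exact Finset.single_le_sum (f := fun z => (f x + f z - 2 * f y)^2)
        (fun z _ => sq_nonneg _) hx
    nlinarith [h1, mul_nonneg
      (by linarith : (0:ℝ) ≤ M - (3 * (G.degree x : ℝ) + (G.degree y : ℝ)) / 2)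
      (sq_nonneg (f x - f y))]
  have partB : (1/2) * ((2 - (G.degree x : ℝ)) * Q)
      ≤ (1/2) * (∑ y ∈ G.neighborFinset x, (f x - f y))^2 := by
    apply mul_le_mul_of_nonneg_left _ (by norm_num : (0:ℝ) ≤ 1/2)
    have h := sq_sum_aux (G.neighborFinset x) (fun y => f x - f y)
    rwa [G.card_neighborFinset_eq_degree] at h
  calc (4 - M) * ((1/2) * Q)
      = (1 - M/2 + (G.degree x : ℝ)/2) * Q + (1/2) * ((2 - (G.degree x : ℝ)) * Q) := by ring
    _ ≤ _ := add_le_add partA partB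

/-- if `G` is triangle-free then `Ric(G) ≥ 4 - max_{x~y} (3d(x)+d(y))/2`. -/
theorem ric_ge_of_triangle_free (h3 : G.CliqueFree 3) (M : ℝ)
    (hM : ∀ x y : V, G.Adj x y → (3 * (G.degree x : ℝ) + (G.degree y : ℝ)) / 2 ≤ M) :
    ((4 - M : ℝ) : EReal) ≤ ric G := by
  apply le_sSup
  exact ⟨4 - M, rfl, fun x f => pointwise G M hM x f⟩

end RicciPaper
end

section
/- The discrete Ricci curvature of the Bruhat graph of the symmetric group S₃ equals 2. -/
open Finset Real

namespace RicciPaper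

variable {V : Type*} [DecidableEq V] (G : SimpleGraph V) [∀ v : V, Fintype (G.neighborSet v)]

/-- The Bruhat graph of `S₃`: vertices are the permutations of `{1,2,3}`, with an edge
between `w` and `v` whenever `v = t * w` for a reflection `t` (a nontrivial involution,
i.e. a transposition in `S₃`). -/
def bruhatS3 : SimpleGraph (Equiv.Perm (Fin 3)) :=
  SimpleGraph.fromRel fun w v => ∃ t : Equiv.Perm (Fin 3), t * t = 1 ∧ t ≠ 1 ∧ v = t * w

noncomputable instance : ∀ v, Fintype (bruhatS3.neighborSet v) :=
  fun _ => Fintype.ofFinite _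


-- ===== auxiliary material =====

/-- notation for the six permutations -/
def pS0 : Equiv.Perm (Fin 3) := Equiv.swap 0 1
def pS1 : Equiv.Perm (Fin 3) := Equiv.swap 1 2
def pS2 : Equiv.Perm (Fin 3) := Equiv.swap 0 2
def pC1 : Equiv.Perm (Fin 3) := pS0 * pS1
def pC2 : Equiv.Perm (Fin 3) := pC1 * pC1

lemma sum3 {M : Type*} [AddCommMonoid M] {a b c : Equiv.Perm (Fin 3)}
    (hab : a ≠ b) (hac : a ≠ c) (hbc : b ≠ c) (f : Equiv.Perm (Fin 3) → M) :
    ∑ v ∈ ({a, b, c} : Finset (Equiv.Perm (Fin 3))), f v = f a + f b + f c := by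
  rw [Finset.sum_insert (by simp [hab, hac]), Finset.sum_insert (by simp [hbc]),
    Finset.sum_singleton, add_assoc]

lemma nb_one : bruhatS3.neighborFinset 1 = {pS0, pS1, pS2} := by
  ext a; rw [SimpleGraph.mem_neighborFinset]
  simp only [bruhatS3, SimpleGraph.fromRel_adj]; revert a; decide

lemma nb_c1 : bruhatS3.neighborFinset pC1 = {pS0, pS1, pS2} := by
  ext a; rw [SimpleGraph.mem_neighborFinset]
  simp only [bruhatS3, SimpleGraph.fromRel_adj]; revert a; decide

lemma nb_c2 : bruhatS3.neighborFinset pC2 = {pS0, pS1, pS2} := by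
  ext a; rw [SimpleGraph.mem_neighborFinset]
  simp only [bruhatS3, SimpleGraph.fromRel_adj]; revert a; decide

lemma nb_s0 : bruhatS3.neighborFinset pS0 = {1, pC1, pC2} := by
  ext a; rw [SimpleGraph.mem_neighborFinset]
  simp only [bruhatS3, SimpleGraph.fromRel_adj]; revert a; decide

lemma nb_s1 : bruhatS3.neighborFinset pS1 = {1, pC1, pC2} := by
  ext a; rw [SimpleGraph.mem_neighborFinset]
  simp only [bruhatS3, SimpleGraph.fromRel_adj]; revert a; decide

lemma nb_s2 : bruhatS3.neighborFinset pS2 = {1, pC1, pC2} := by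
  ext a; rw [SimpleGraph.mem_neighborFinset]
  simp only [bruhatS3, SimpleGraph.fromRel_adj]; revert a; decide

lemma lap_one (f : Equiv.Perm (Fin 3) → ℝ) :
    lap bruhatS3 f 1 = (f pS0 - f 1) + (f pS1 - f 1) + (f pS2 - f 1) := by
  rw [lap, nb_one, sum3 (by decide) (by decide) (by decide)]

lemma lap_c1 (f : Equiv.Perm (Fin 3) → ℝ) :
    lap bruhatS3 f pC1 = (f pS0 - f pC1) + (f pS1 - f pC1) + (f pS2 - f pC1) := by
  rw [lap, nb_c1, sum3 (by decide) (by decide) (by decide)]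

lemma lap_c2 (f : Equiv.Perm (Fin 3) → ℝ) :
    lap bruhatS3 f pC2 = (f pS0 - f pC2) + (f pS1 - f pC2) + (f pS2 - f pC2) := by
  rw [lap, nb_c2, sum3 (by decide) (by decide) (by decide)]

lemma lap_s0 (f : Equiv.Perm (Fin 3) → ℝ) :
    lap bruhatS3 f pS0 = (f 1 - f pS0) + (f pC1 - f pS0) + (f pC2 - f pS0) := by
  rw [lap, nb_s0, sum3 (by decide) (by decide) (by decide)]

lemma lap_s1 (f : Equiv.Perm (Fin 3) → ℝ) :
    lap bruhatS3 f pS1 = (f 1 - f pS1) + (f pC1 - f pS1) + (f pC2 - f pS1) := by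
  rw [lap, nb_s1, sum3 (by decide) (by decide) (by decide)]

lemma lap_s2 (f : Equiv.Perm (Fin 3) → ℝ) :
    lap bruhatS3 f pS2 = (f 1 - f pS2) + (f pC1 - f pS2) + (f pC2 - f pS2) := by
  rw [lap, nb_s2, sum3 (by decide) (by decide) (by decide)]

lemma gam_one (f g : Equiv.Perm (Fin 3) → ℝ) :
    gam bruhatS3 f g 1 = (1/2) * ((f 1 - f pS0) * (g 1 - g pS0) +
      (f 1 - f pS1) * (g 1 - g pS1) + (f 1 - f pS2) * (g 1 - g pS2)) := by
  rw [gam, nb_one, sum3 (by decide) (by decide) (by decide)]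

lemma gam_c1 (f g : Equiv.Perm (Fin 3) → ℝ) :
    gam bruhatS3 f g pC1 = (1/2) * ((f pC1 - f pS0) * (g pC1 - g pS0) +
      (f pC1 - f pS1) * (g pC1 - g pS1) + (f pC1 - f pS2) * (g pC1 - g pS2)) := by
  rw [gam, nb_c1, sum3 (by decide) (by decide) (by decide)]

lemma gam_c2 (f g : Equiv.Perm (Fin 3) → ℝ) :
    gam bruhatS3 f g pC2 = (1/2) * ((f pC2 - f pS0) * (g pC2 - g pS0) +
      (f pC2 - f pS1) * (g pC2 - g pS1) + (f pC2 - f pS2) * (g pC2 - g pS2)) := by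
  rw [gam, nb_c2, sum3 (by decide) (by decide) (by decide)]

lemma gam_s0 (f g : Equiv.Perm (Fin 3) → ℝ) :
    gam bruhatS3 f g pS0 = (1/2) * ((f pS0 - f 1) * (g pS0 - g 1) +
      (f pS0 - f pC1) * (g pS0 - g pC1) + (f pS0 - f pC2) * (g pS0 - g pC2)) := by
  rw [gam, nb_s0, sum3 (by decide) (by decide) (by decide)]

lemma gam_s1 (f g : Equiv.Perm (Fin 3) → ℝ) :
    gam bruhatS3 f g pS1 = (1/2) * ((f pS1 - f 1) * (g pS1 - g 1) +
      (f pS1 - f pC1) * (g pS1 - g pC1) + (f pS1 - f pC2) * (g pS1 - g pC2)) := by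
  rw [gam, nb_s1, sum3 (by decide) (by decide) (by decide)]

lemma gam_s2 (f g : Equiv.Perm (Fin 3) → ℝ) :
    gam bruhatS3 f g pS2 = (1/2) * ((f pS2 - f 1) * (g pS2 - g 1) +
      (f pS2 - f pC1) * (g pS2 - g pC1) + (f pS2 - f pC2) * (g pS2 - g pC2)) := by
  rw [gam, nb_s2, sum3 (by decide) (by decide) (by decide)]

/-- the sum-of-squares certificate, stated as a pure real inequality for an
even-type vertex with value `a`, other even values `y z`, neighbor values `b1 b2 b3`. -/
lemma key (a y z b1 b2 b3 : ℝ) :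
    2 * ((1/2) * ((a - b1) * (a - b1) + (a - b2) * (a - b2) + (a - b3) * (a - b3))) ≤
    (1/2) * (((1/2) * ((b1 - a) * (b1 - a) + (b1 - y) * (b1 - y) + (b1 - z) * (b1 - z))
        - (1/2) * ((a - b1) * (a - b1) + (a - b2) * (a - b2) + (a - b3) * (a - b3)))
      + ((1/2) * ((b2 - a) * (b2 - a) + (b2 - y) * (b2 - y) + (b2 - z) * (b2 - z))
        - (1/2) * ((a - b1) * (a - b1) + (a - b2) * (a - b2) + (a - b3) * (a - b3)))
      + ((1/2) * ((b3 - a) * (b3 - a) + (b3 - y) * (b3 - y) + (b3 - z) * (b3 - z))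
        - (1/2) * ((a - b1) * (a - b1) + (a - b2) * (a - b2) + (a - b3) * (a - b3))))
    - (1/2) * ((a - b1) * (((b1 - a) + (b2 - a) + (b3 - a)) - ((a - b1) + (y - b1) + (z - b1)))
      + (a - b2) * (((b1 - a) + (b2 - a) + (b3 - a)) - ((a - b2) + (y - b2) + (z - b2)))
      + (a - b3) * (((b1 - a) + (b2 - a) + (b3 - a)) - ((a - b3) + (y - b3) + (z - b3)))) := by
  nlinarith [sq_nonneg (6*a + 3*y + 3*z - 4*b1 - 4*b2 - 4*b3), sq_nonneg (y - z),
    sq_nonneg (2*b1 - b2 - b3), sq_nonneg (b2 - b3)]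

lemma main_ineq (x : Equiv.Perm (Fin 3)) (f : Equiv.Perm (Fin 3) → ℝ) :
    2 * gam bruhatS3 f f x ≤ gam2 bruhatS3 f x := by
  have hx : x = 1 ∨ x = pS0 ∨ x = pS1 ∨ x = pS2 ∨ x = pC1 ∨ x = pC2 := by
    revert x; decide
  rcases hx with rfl | rfl | rfl | rfl | rfl | rfl
  · simp only [gam2, lap_one, lap_c1, lap_c2, lap_s0, lap_s1, lap_s2,
      gam_one, gam_c1, gam_c2, gam_s0, gam_s1, gam_s2]
    have := key (f 1) (f pC1) (f pC2) (f pS0) (f pS1) (f pS2)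
    linarith
  · simp only [gam2, lap_one, lap_c1, lap_c2, lap_s0, lap_s1, lap_s2,
      gam_one, gam_c1, gam_c2, gam_s0, gam_s1, gam_s2]
    have := key (f pS0) (f pS1) (f pS2) (f 1) (f pC1) (f pC2)
    linarith
  · simp only [gam2, lap_one, lap_c1, lap_c2, lap_s0, lap_s1, lap_s2,
      gam_one, gam_c1, gam_c2, gam_s0, gam_s1, gam_s2]
    have := key (f pS1) (f pS0) (f pS2) (f 1) (f pC1) (f pC2)
    linarith
  · simp only [gam2, lap_one, lap_c1, lap_c2, lap_s0, lap_s1, lap_s2,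
      gam_one, gam_c1, gam_c2, gam_s0, gam_s1, gam_s2]
    have := key (f pS2) (f pS0) (f pS1) (f 1) (f pC1) (f pC2)
    linarith
  · simp only [gam2, lap_one, lap_c1, lap_c2, lap_s0, lap_s1, lap_s2,
      gam_one, gam_c1, gam_c2, gam_s0, gam_s1, gam_s2]
    have := key (f pC1) (f 1) (f pC2) (f pS0) (f pS1) (f pS2)
    linarith
  · simp only [gam2, lap_one, lap_c1, lap_c2, lap_s0, lap_s1, lap_s2,
      gam_one, gam_c1, gam_c2, gam_s0, gam_s1, gam_s2]
    have := key (f pC2) (f 1) (f pC1) (f pS0) (f pS1) (f pS2)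
    linarith

/-- the extremal test function. -/
noncomputable def gExt : Equiv.Perm (Fin 3) → ℝ :=
  fun w => if w = 1 then 1 else if w = pC1 then -1 else if w = pC2 then -1 else 0

lemma gExt_one : gExt 1 = 1 := by simp [gExt]
lemma gExt_c1 : gExt pC1 = -1 := by
  simp [gExt, show pC1 ≠ 1 by decide]
lemma gExt_c2 : gExt pC2 = -1 := by
  simp [gExt, show pC2 ≠ 1 by decide, show pC2 ≠ pC1 by decide]
lemma gExt_s0 : gExt pS0 = 0 := by
  simp [gExt, show pS0 ≠ 1 by decide, show pS0 ≠ pC1 by decide, show pS0 ≠ pC2 by decide]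
lemma gExt_s1 : gExt pS1 = 0 := by
  simp [gExt, show pS1 ≠ 1 by decide, show pS1 ≠ pC1 by decide, show pS1 ≠ pC2 by decide]
lemma gExt_s2 : gExt pS2 = 0 := by
  simp [gExt, show pS2 ≠ 1 by decide, show pS2 ≠ pC1 by decide, show pS2 ≠ pC2 by decide]

lemma gam_gExt : gam bruhatS3 gExt gExt 1 = 3/2 := by
  rw [gam_one, gExt_one, gExt_s0, gExt_s1, gExt_s2]; norm_num

lemma gam2_gExt : gam2 bruhatS3 gExt 1 = 3 := by
  simp only [gam2, lap_one, lap_c1, lap_c2, lap_s0, lap_s1, lap_s2,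
    gam_one, gam_c1, gam_c2, gam_s0, gam_s1, gam_s2,
    gExt_one, gExt_c1, gExt_c2, gExt_s0, gExt_s1, gExt_s2]
  norm_num


/-- the discrete Ricci curvature of the Bruhat graph of `S₃` equals `2`. -/
theorem ric_bruhatS3 : ric bruhatS3 = (2 : EReal) := by
  rw [ric]
  apply le_antisymm
  · apply sSup_le
    rintro K ⟨k, rfl, hk⟩
    have h := hk 1 gExt
    rw [gam_gExt, gam2_gExt] at h
    have hk2 : k ≤ 2 := by linarith
    have h2 : ((2:ℝ) : EReal) = (2 : EReal) := by norm_cast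
    exact h2 ▸ EReal.coe_le_coe_iff.mpr hk2
  · apply le_sSup
    exact ⟨2, by norm_cast, main_ineq⟩


end RicciPaper
end
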